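/- Let K be a field of characteristic ≠ 2 and S = K[u,v,w]/(u²−v²w). The kernel of the S-linear map S³ → S given by (a,b,c) ↦ 2u·a − 2vw·b − v²·c contains the four elements e₁ = (vw, u, 0), e₂ = (u, v, 0), e₃ = (v², 0, 2u), e₄ = (0, v, −2w), and these four elements generate this kernel as an S-module. -/

import Mathlib

set_option synthInstance.maxHeartbeats 1000000
set_option maxHeartbeats 2000000

/-- The ideal `(u² − v²w) ⊂ K[u,v,w]` (with `X 0 = u`, `X 1 = v`, `X 2 = w`). -/
noncomputable def pinchIdeal6 (K : Type*) [Field K] : Ideal (MvPolynomial (Fin 3) K) :=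
  Ideal.span {MvPolynomial.X 0 ^ 2 - MvPolynomial.X 1 ^ 2 * MvPolynomial.X 2}

/-- `S = K[u,v,w]/(u² − v²w)`. -/
abbrev S6 (K : Type*) [Field K] := MvPolynomial (Fin 3) K ⧸ pinchIdeal6 K

noncomputable def u6 (K : Type*) [Field K] : S6 K :=
  Ideal.Quotient.mk (pinchIdeal6 K) (MvPolynomial.X 0)
noncomputable def v6 (K : Type*) [Field K] : S6 K :=
  Ideal.Quotient.mk (pinchIdeal6 K) (MvPolynomial.X 1)
noncomputable def w6 (K : Type*) [Field K] : S6 K :=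
  Ideal.Quotient.mk (pinchIdeal6 K) (MvPolynomial.X 2)

/-- The gradient map `S³ → S`, `(a,b,c) ↦ 2u·a − 2vw·b − v²·c`. -/
noncomputable def grad6 (K : Type*) [Field K] : (Fin 3 → S6 K) →ₗ[S6 K] S6 K :=
  (2 * u6 K) • (LinearMap.proj 0 : (Fin 3 → S6 K) →ₗ[S6 K] S6 K)
    - (2 * (v6 K * w6 K)) • (LinearMap.proj 1 : (Fin 3 → S6 K) →ₗ[S6 K] S6 K)
    - (v6 K ^ 2) • (LinearMap.proj 2 : (Fin 3 → S6 K) →ₗ[S6 K] S6 K)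

/-! Over `R = K[v,w]` the ring `S` is `R[u]/(u² − v²w)`, a free `R`-module with basis `1, u`.
Writing every coordinate of a vector in `S³` as `p + q·u` with `p, q ∈ R`, subtracting suitable
multiples of `e₁, e₂, e₃` removes all the `u`-parts. A kernel vector `y` with coordinates in `R`
then satisfies, comparing the coefficients of `1` and `u`, `y₀ = 0` and `2w·y₁ + v·y₂ = 0`;
since `v` is prime and does not divide `2w`, this forces `y = t·e₄`. -/

open Polynomial in
theorem Polynomial.nontrivial_of_natDegree_ne_zero {R : Type*} [Semiring R] {g : R[X]}
    (h : g.natDegree ≠ 0) : Nontrivial R := by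
  by_contra hR
  rw [not_nontrivial_iff_subsingleton] at hR
  exact h (by simp [Subsingleton.elim g 0])

open Polynomial in
theorem AdjoinRoot.exists_eq_of_add_of_mul_root {R : Type*} [CommRing R] {g : R[X]}
    (hg : g.Monic) (hdeg : g.natDegree = 2) (x : AdjoinRoot g) :
    ∃ p q : R, x = of g p + of g q * root g := by
  have := nontrivial_of_natDegree_ne_zero (hdeg.trans_ne two_ne_zero)
  obtain ⟨f, rfl⟩ := mk_surjective x
  have hr : (f %ₘ g).degree ≤ 1 := by
    have := degree_modByMonic_lt f hg
    rw [degree_eq_natDegree hg.ne_zero, hdeg] at this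
    exact Order.le_of_lt_succ this
  refine ⟨(f %ₘ g).coeff 0, (f %ₘ g).coeff 1, ?_⟩
  rw [← mk_leftInverse hg (mk g f), modByMonicHom_mk, eq_X_add_C_of_degree_le_one hr]
  simp [add_comm]

open Polynomial in
theorem AdjoinRoot.eq_zero_of_of_add_of_mul_root_eq_zero {R : Type*} [CommRing R] {g : R[X]}
    (hg : g.Monic) (hdeg : g.natDegree = 2) {p q : R}
    (h : of g p + of g q * root g = 0) : p = 0 ∧ q = 0 := by
  have := nontrivial_of_natDegree_ne_zero (hdeg.trans_ne two_ne_zero)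
  have hdvd : g ∣ C p + C q * X := by
    rwa [← mk_eq_zero, map_add, map_mul, mk_C, mk_C, mk_X]
  have hzero : C p + C q * X = 0 := by
    by_contra hne
    refine hg.not_dvd_of_degree_lt hne ?_ hdvd
    rw [degree_eq_natDegree hg.ne_zero, hdeg]
    compute_degree!
  exact ⟨by simpa using congrArg (coeff · 0) hzero, by simpa using congrArg (coeff · 1) hzero⟩

namespace PinchPoint

open MvPolynomial

variable (K : Type*) [Field K]

lemma finSuccEquiv_X_one : finSuccEquiv K 2 (X 1) = Polynomial.C (X 0) :=
  finSuccEquiv_X_succ (j := 0)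

lemma finSuccEquiv_X_two : finSuccEquiv K 2 (X 2) = Polynomial.C (X 1) :=
  finSuccEquiv_X_succ (j := 1)

noncomputable def quadratic : Polynomial (MvPolynomial (Fin 2) K) :=
  Polynomial.X ^ 2 - Polynomial.C (X 0 ^ 2 * X 1)

lemma quadratic_monic : (quadratic K).Monic :=
  Polynomial.monic_X_pow_sub_C _ two_ne_zero

lemma quadratic_natDegree : (quadratic K).natDegree = 2 :=
  Polynomial.natDegree_X_pow_sub_C

lemma map_pinchIdeal6 :
    (pinchIdeal6 K).map (finSuccEquiv K 2 : MvPolynomial (Fin 3) K →+* _) =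
      Ideal.span {quadratic K} := by
  rw [pinchIdeal6, Ideal.map_span, Set.image_singleton]
  simp [quadratic, finSuccEquiv_X_zero, finSuccEquiv_X_one, finSuccEquiv_X_two]

noncomputable def equivAdjoinRoot : S6 K ≃+* AdjoinRoot (quadratic K) :=
  Ideal.quotientEquiv _ _ (finSuccEquiv K 2).toRingEquiv (map_pinchIdeal6 K).symm

lemma equivAdjoinRoot_mk (z : MvPolynomial (Fin 3) K) :
    equivAdjoinRoot K (Ideal.Quotient.mk _ z) = AdjoinRoot.mk _ (finSuccEquiv K 2 z) :=
  rfl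

noncomputable def ofBase : MvPolynomial (Fin 2) K →+* S6 K :=
  (equivAdjoinRoot K).symm.toRingHom.comp (AdjoinRoot.of _)

lemma equivAdjoinRoot_u6 : equivAdjoinRoot K (u6 K) = AdjoinRoot.root _ := by
  rw [u6, equivAdjoinRoot_mk, finSuccEquiv_X_zero, AdjoinRoot.mk_X]

lemma equivAdjoinRoot_ofBase (p : MvPolynomial (Fin 2) K) :
    equivAdjoinRoot K (ofBase K p) = AdjoinRoot.of _ p :=
  (equivAdjoinRoot K).apply_symm_apply _

lemma ofBase_X_zero : ofBase K (X 0) = v6 K := by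
  rw [ofBase, RingHom.comp_apply, RingEquiv.toRingHom_eq_coe, RingEquiv.coe_toRingHom,
    RingEquiv.symm_apply_eq, v6, equivAdjoinRoot_mk, finSuccEquiv_X_one, AdjoinRoot.mk_C]

lemma ofBase_X_one : ofBase K (X 1) = w6 K := by
  rw [ofBase, RingHom.comp_apply, RingEquiv.toRingHom_eq_coe, RingEquiv.coe_toRingHom,
    RingEquiv.symm_apply_eq, w6, equivAdjoinRoot_mk, finSuccEquiv_X_two, AdjoinRoot.mk_C]

lemma exists_eq_ofBase_add_ofBase_mul_u6 (x : S6 K) :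
    ∃ p q : MvPolynomial (Fin 2) K, x = ofBase K p + ofBase K q * u6 K := by
  obtain ⟨p, q, h⟩ := AdjoinRoot.exists_eq_of_add_of_mul_root (quadratic_monic K)
    (quadratic_natDegree K) (equivAdjoinRoot K x)
  refine ⟨p, q, (equivAdjoinRoot K).injective ?_⟩
  rw [h, map_add, map_mul, equivAdjoinRoot_ofBase, equivAdjoinRoot_ofBase, equivAdjoinRoot_u6]

lemma eq_zero_of_ofBase_add_ofBase_mul_u6_eq_zero {p q : MvPolynomial (Fin 2) K}
    (h : ofBase K p + ofBase K q * u6 K = 0) : p = 0 ∧ q = 0 := by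
  apply AdjoinRoot.eq_zero_of_of_add_of_mul_root_eq_zero (quadratic_monic K)
    (quadratic_natDegree K)
  rw [← equivAdjoinRoot_ofBase, ← equivAdjoinRoot_ofBase, ← equivAdjoinRoot_u6, ← map_mul,
    ← map_add, h, map_zero]

lemma u6_sq : u6 K ^ 2 = v6 K ^ 2 * w6 K := by
  rw [← sub_eq_zero, u6, v6, w6, ← map_pow, ← map_pow, ← map_mul, ← map_sub,
    Ideal.Quotient.eq_zero_iff_mem]
  exact Ideal.subset_span rfl

lemma grad6_apply (x : Fin 3 → S6 K) :
    grad6 K x = 2 * u6 K * x 0 - 2 * (v6 K * w6 K) * x 1 - v6 K ^ 2 * x 2 := by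
  simp [grad6]

def generators : Set (Fin 3 → S6 K) :=
  {![v6 K * w6 K, u6 K, 0], ![u6 K, v6 K, 0], ![v6 K ^ 2, 0, 2 * u6 K], ![0, v6 K, -(2 * w6 K)]}

lemma span_generators_le_ker :
    Submodule.span (S6 K) (generators K) ≤ LinearMap.ker (grad6 K) := by
  rw [Submodule.span_le]
  rintro _ (rfl | rfl | rfl | rfl) <;>
    simp only [SetLike.mem_coe, LinearMap.mem_ker, grad6_apply, Matrix.cons_val_zero,
      Matrix.cons_val_one, Matrix.cons_val_two, Matrix.head_cons, Matrix.tail_cons] <;>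
    first | ring1 | linear_combination 2 * u6_sq K

lemma exists_sub_ofBase_mem_span (h2 : (2 : K) ≠ 0) (x : Fin 3 → S6 K) :
    ∃ y : Fin 3 → MvPolynomial (Fin 2) K,
      x - ofBase K ∘ y ∈ Submodule.span (S6 K) (generators K) := by
  obtain ⟨a₀, a₁, ha⟩ := exists_eq_ofBase_add_ofBase_mul_u6 K (x 0)
  obtain ⟨b₀, b₁, hb⟩ := exists_eq_ofBase_add_ofBase_mul_u6 K (x 1)
  obtain ⟨c₀, c₁, hc⟩ := exists_eq_ofBase_add_ofBase_mul_u6 K (x 2)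
  set c := C 2⁻¹ * c₁
  have hc₁ : 2 * ofBase K c = ofBase K c₁ := by
    rw [← map_ofNat (ofBase K) 2, ← map_mul, ← mul_assoc, ← map_ofNat C 2, ← C_mul,
      mul_inv_cancel₀ h2, C_1, one_mul]
  refine ⟨![a₀ - X 0 * X 1 * b₁ - X 0 ^ 2 * c, b₀ - X 0 * a₁, c₀], ?_⟩
  have hx : x - ofBase K ∘ ![a₀ - X 0 * X 1 * b₁ - X 0 ^ 2 * c, b₀ - X 0 * a₁, c₀] =
      ofBase K b₁ • ![v6 K * w6 K, u6 K, 0] + ofBase K a₁ • ![u6 K, v6 K, 0]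
        + ofBase K c • ![v6 K ^ 2, 0, 2 * u6 K] := by
    funext i
    fin_cases i <;>
      simp only [Fin.zero_eta, Fin.mk_one, Fin.reduceFinMk, Pi.add_apply, Pi.sub_apply,
        Pi.smul_apply, Function.comp_apply, smul_eq_mul, Matrix.cons_val_zero,
        Matrix.cons_val_one, Matrix.cons_val_two, Matrix.head_cons, Matrix.tail_cons,
        map_sub, map_mul, map_pow, ofBase_X_zero, ofBase_X_one]
    · linear_combination ha
    · linear_combination hb
    · linear_combination hc - u6 K * hc₁
  rw [hx]
  refine add_mem (add_mem ?_ ?_) ?_ <;>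
    exact Submodule.smul_mem _ _ (Submodule.subset_span (by simp [generators]))

lemma exists_eq_smul_of_grad6_ofBase_eq_zero (h2 : (2 : K) ≠ 0)
    (y : Fin 3 → MvPolynomial (Fin 2) K) (hy : grad6 K (ofBase K ∘ y) = 0) :
    ∃ t, ofBase K ∘ y = ofBase K t • ![0, v6 K, -(2 * w6 K)] := by
  have h2' : IsUnit (2 : MvPolynomial (Fin 2) K) := by
    simpa only [map_ofNat] using (Ne.isUnit h2).map (C : K →+* MvPolynomial (Fin 2) K)
  obtain ⟨h₀, h₁⟩ : -(2 * X 0 * X 1 * y 1) - X 0 ^ 2 * y 2 = 0 ∧ 2 * y 0 = 0 := by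
    apply eq_zero_of_ofBase_add_ofBase_mul_u6_eq_zero K
    simp only [grad6_apply, Function.comp_apply] at hy
    simp only [map_sub, map_neg, map_mul, map_pow, map_ofNat, ofBase_X_zero, ofBase_X_one]
    linear_combination hy
  have hy₀ : y 0 = 0 := (mul_eq_zero.mp h₁).resolve_left h2'.ne_zero
  have hy₁₂ : 2 * X 1 * y 1 + X 0 * y 2 = 0 :=
    mul_left_cancel₀ (X_ne_zero 0) (by linear_combination -h₀)
  obtain ⟨t, ht⟩ : X 0 ∣ y 1 := by
    have : X 0 ∣ 2 * (X 1 * y 1) := ⟨-y 2, by linear_combination hy₁₂⟩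
    rwa [h2'.dvd_mul_left, X_dvd_mul_iff, X_dvd_X, or_iff_right (by decide)] at this
  have hy₂ : y 2 = -(2 * X 1 * t) :=
    mul_left_cancel₀ (X_ne_zero (0 : Fin 2)) (by linear_combination hy₁₂ - 2 * X 1 * ht)
  refine ⟨t, funext fun i => ?_⟩
  fin_cases i <;>
    simp only [Fin.zero_eta, Fin.mk_one, Fin.reduceFinMk, Function.comp_apply, Pi.smul_apply,
      smul_eq_mul, Matrix.cons_val_zero, Matrix.cons_val_one, Matrix.cons_val, hy₀, ht, hy₂,
      map_zero, map_neg, map_mul, map_ofNat, ofBase_X_zero, ofBase_X_one, mul_zero] <;>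
    ring

end PinchPoint

/-- For `S = K[u,v,w]/(u²−v²w)` with `char K ≠ 2`, the kernel of the `S`-linear map
`S³ → S`, `(a,b,c) ↦ 2u·a − 2vw·b − v²·c`, contains
`e₁ = (vw, u, 0)`, `e₂ = (u, v, 0)`, `e₃ = (v², 0, 2u)`, `e₄ = (0, v, −2w)`,
and these four elements generate the kernel as an `S`-module (i.e. the kernel equals
their span). -/
theorem stmt_6 (K : Type*) [Field K] (h2 : (2 : K) ≠ 0) :
    LinearMap.ker (grad6 K) =
      Submodule.span (S6 K)
        {![v6 K * w6 K, u6 K, 0], ![u6 K, v6 K, 0],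
          ![v6 K ^ 2, 0, 2 * u6 K], ![0, v6 K, -(2 * w6 K)]} := by
  change _ = Submodule.span _ (PinchPoint.generators K)
  refine le_antisymm (fun x hx => ?_) (PinchPoint.span_generators_le_ker K)
  obtain ⟨y, hy⟩ := PinchPoint.exists_sub_ofBase_mem_span K h2 x
  have hker : grad6 K (PinchPoint.ofBase K ∘ y) = 0 := by
    have := PinchPoint.span_generators_le_ker K hy
    rwa [LinearMap.mem_ker, map_sub, LinearMap.mem_ker.mp hx, zero_sub, neg_eq_zero] at this
  obtain ⟨t, ht⟩ := PinchPoint.exists_eq_smul_of_grad6_ofBase_eq_zero K h2 y hker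
  have hy' : PinchPoint.ofBase K ∘ y ∈ Submodule.span (S6 K) (PinchPoint.generators K) :=
    ht ▸ Submodule.smul_mem _ _ (Submodule.subset_span (by simp [PinchPoint.generators]))
  simpa using add_mem hy hy'
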